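/- For every real s > 0 and all x, y > 0 with x ≠ y, one has 2·𝕂^{Bessel}_{2,2s}(4x, 4y) − 2·(x/y)^{1/2}·𝕂^{Bessel}_{2,2s−1}(4x, 4y) = −J_{2s}(2√x)·J_{2s−1}(2√y)/(2√y). -/

import Mathlib

open MeasureTheory Filter

/-- The Bessel function of the first kind
`J_ν(x) = Σ_{k=0}^∞ (−1)^k (x/2)^{ν+2k} / (k! Γ(ν+k+1))`
(with real power `(x/2)^{ν+2k}`, for `x > 0`). -/
noncomputable def besselJ (ν x : ℝ) : ℝ :=
  ∑' k : ℕ, (-1) ^ k * (x / 2) ^ (ν + 2 * (k : ℝ)) /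
    ((Nat.factorial k : ℝ) * Real.Gamma (ν + (k : ℝ) + 1))

/-- The Bessel determinantal kernel
`𝕂^{Bessel}_{2,s}(x,y) = (√x J_{s+1}(√x) J_s(√y) − √y J_{s+1}(√y) J_s(√x)) / (2(x−y))`. -/
noncomputable def besselKernel (s x y : ℝ) : ℝ :=
  (Real.sqrt x * besselJ (s + 1) (Real.sqrt x) * besselJ s (Real.sqrt y)
    - Real.sqrt y * besselJ (s + 1) (Real.sqrt y) * besselJ s (Real.sqrt x))
    / (2 * (x - y))

/-! The recurrence `J_{ν-1}(x) + J_{ν+1}(x) = (2ν/x) J_ν(x)` is checked on the series: if `t_k`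
is the `k`-th term of `J_ν`, the `k`-th term of `J_{ν-1}` is `(ν+k)/(x/2) · t_k` and the `k`-th term
of `J_{ν+1}` is `-(k+1)/(x/2) · t_{k+1}`, so after a shift of index the two series add up to
`Σ ν/(x/2) · t_k`. With `x = u²`, `y = v²` both kernels are rational in `J_{2s-1}`, `J_{2s}`,
`J_{2s+1}` at `2u` and `2v`; eliminating `J_{2s+1}` by the recurrence leaves a polynomial identity. -/

noncomputable def besselJTerm (ν x : ℝ) (k : ℕ) : ℝ :=
  (-1) ^ k * (x / 2) ^ (ν + 2 * (k : ℝ)) /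
    ((Nat.factorial k : ℝ) * Real.Gamma (ν + (k : ℝ) + 1))

lemma besselJ_eq_tsum_besselJTerm (ν x : ℝ) : besselJ ν x = ∑' k, besselJTerm ν x k := rfl

section

variable {ν x : ℝ}

lemma besselJTerm_succ (hx : x ≠ 0) (k : ℕ) (hk : ν + k + 1 ≠ 0) :
    besselJTerm ν x (k + 1) = -((x / 2) ^ 2 / ((k + 1) * (ν + k + 1))) * besselJTerm ν x k := by
  have hpow :
      (x / 2) ^ (ν + 2 * ((k + 1 : ℕ) : ℝ)) = (x / 2) ^ (ν + 2 * (k : ℝ)) * (x / 2) ^ 2 := by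
    rw [← Real.rpow_add_natCast (by positivity)]
    push_cast
    ring_nf
  have hΓ :
      Real.Gamma (ν + ((k + 1 : ℕ) : ℝ) + 1) = (ν + k + 1) * Real.Gamma (ν + k + 1) := by
    rw [← Real.Gamma_add_one hk]
    push_cast
    ring_nf
  rw [besselJTerm, besselJTerm, hpow, hΓ, Nat.factorial_succ]
  push_cast
  -- `Real.Gamma` is `0` at its poles, so split the inverses rather than clear denominators
  simp only [div_eq_mul_inv, mul_inv]
  ring

lemma besselJTerm_sub_one (hx : x ≠ 0) (k : ℕ) (hk : ν + k ≠ 0) :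
    besselJTerm (ν - 1) x k = (ν + k) / (x / 2) * besselJTerm ν x k := by
  have hpow : (x / 2) ^ (ν + 2 * (k : ℝ)) = (x / 2) ^ (ν - 1 + 2 * (k : ℝ)) * (x / 2) := by
    rw [← Real.rpow_add_one (by positivity)]
    ring_nf
  have hΓ : Real.Gamma (ν + k + 1) = (ν + k) * Real.Gamma (ν - 1 + k + 1) := by
    rw [Real.Gamma_add_one hk]
    ring_nf
  rw [besselJTerm, besselJTerm, hpow, hΓ]
  field_simp

lemma besselJTerm_add_one (hx : x ≠ 0) (k : ℕ) :
    besselJTerm (ν + 1) x k = -((k + 1) / (x / 2)) * besselJTerm ν x (k + 1) := by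
  have hpow :
      (x / 2) ^ (ν + 2 * ((k + 1 : ℕ) : ℝ)) = (x / 2) ^ (ν + 1 + 2 * (k : ℝ)) * (x / 2) := by
    rw [← Real.rpow_add_one (by positivity)]
    push_cast
    ring_nf
  rw [besselJTerm, besselJTerm, hpow, Nat.factorial_succ]
  push_cast
  field_simp
  ring_nf

lemma summable_besselJTerm (ν : ℝ) (hx : x ≠ 0) : Summable (besselJTerm ν x) := by
  refine summable_of_ratio_norm_eventually_le (r := 1 / 2) (by norm_num) ?_
  filter_upwards [eventually_ge_atTop ⌈max (2 * (x / 2) ^ 2) (-ν)⌉₊] with k hk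
  have hk' : max (2 * (x / 2) ^ 2) (-ν) ≤ k := Nat.ceil_le.1 hk
  have hν : 1 ≤ ν + k + 1 := by linarith [le_max_right (2 * (x / 2) ^ 2) (-ν)]
  have hratio : (x / 2) ^ 2 / ((k + 1) * (ν + k + 1)) ≤ 1 / 2 := by
    rw [div_le_iff₀ (by positivity)]
    nlinarith [le_max_left (2 * (x / 2) ^ 2) (-ν)]
  rw [besselJTerm_succ hx k (by linarith), norm_mul, norm_neg, Real.norm_of_nonneg (by positivity)]
  exact mul_le_mul_of_nonneg_right hratio (norm_nonneg _)

theorem besselJ_sub_one_add_besselJ_add_one (hν : 0 < ν) (hx : x ≠ 0) :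
    besselJ (ν - 1) x + besselJ (ν + 1) x = 2 * ν / x * besselJ ν x := by
  set f : ℕ → ℝ := fun k => -(k / (x / 2)) * besselJTerm ν x k
  have hf_succ : ∀ k, f (k + 1) = besselJTerm (ν + 1) x k := fun k => by
    simp only [f, besselJTerm_add_one hx k]
    push_cast
    rfl
  have hf : Summable f :=
    (summable_nat_add_iff 1).1 (by simpa only [hf_succ] using summable_besselJTerm (ν + 1) hx)
  have hJ_add_one : besselJ (ν + 1) x = ∑' k, f k := by
    have hf0 : f 0 = 0 := by simp [f]
    rw [hf.tsum_eq_zero_add, hf0, zero_add, besselJ_eq_tsum_besselJTerm]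
    exact tsum_congr fun k => (hf_succ k).symm
  have hterm_sub_one : besselJTerm (ν - 1) x = fun k => (ν + k) / (x / 2) * besselJTerm ν x k :=
    funext fun k => besselJTerm_sub_one hx k (by positivity)
  have hg := summable_besselJTerm (ν - 1) hx
  rw [hterm_sub_one] at hg
  rw [hJ_add_one, besselJ_eq_tsum_besselJTerm, hterm_sub_one, ← hg.tsum_add hf,
    besselJ_eq_tsum_besselJTerm, ← tsum_mul_left]
  congr 1 with k
  ring

end

lemma besselKernel_four_mul_sq (s : ℝ) {u v : ℝ} (hu : 0 ≤ u) (hv : 0 ≤ v) :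
    besselKernel s (4 * u ^ 2) (4 * v ^ 2) =
      (2 * u * besselJ (s + 1) (2 * u) * besselJ s (2 * v)
        - 2 * v * besselJ (s + 1) (2 * v) * besselJ s (2 * u)) / (8 * (u ^ 2 - v ^ 2)) := by
  rw [besselKernel, show 4 * u ^ 2 = (2 * u) ^ 2 by ring, show 4 * v ^ 2 = (2 * v) ^ 2 by ring,
    Real.sqrt_sq (by positivity), Real.sqrt_sq (by positivity)]
  ring

theorem stmt_19 (s x y : ℝ) (hs : 0 < s) (hx : 0 < x) (hy : 0 < y) (hxy : x ≠ y) :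
    2 * besselKernel (2 * s) (4 * x) (4 * y)
        - 2 * Real.sqrt (x / y) * besselKernel (2 * s - 1) (4 * x) (4 * y)
      = -(besselJ (2 * s) (2 * Real.sqrt x)) * besselJ (2 * s - 1) (2 * Real.sqrt y)
          / (2 * Real.sqrt y) := by
  obtain ⟨u, hu, rfl⟩ : ∃ u, 0 < u ∧ x = u ^ 2 :=
    ⟨√x, Real.sqrt_pos.2 hx, (Real.sq_sqrt hx.le).symm⟩
  obtain ⟨v, hv, rfl⟩ : ∃ v, 0 < v ∧ y = v ^ 2 :=
    ⟨√y, Real.sqrt_pos.2 hy, (Real.sq_sqrt hy.le).symm⟩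
  have h2s : 0 < 2 * s := by positivity
  have hJu := besselJ_sub_one_add_besselJ_add_one h2s (by positivity : 2 * u ≠ 0)
  have hJv := besselJ_sub_one_add_besselJ_add_one h2s (by positivity : 2 * v ≠ 0)
  have huv : u ^ 2 - v ^ 2 ≠ 0 := sub_ne_zero.2 hxy
  rw [besselKernel_four_mul_sq _ hu.le hv.le, besselKernel_four_mul_sq _ hu.le hv.le,
    sub_add_cancel, ← div_pow, Real.sqrt_sq hu.le, Real.sqrt_sq hv.le,
    Real.sqrt_sq (by positivity), eq_sub_of_add_eq' hJu, eq_sub_of_add_eq' hJv]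
  field_simp
  ring
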